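/- arXiv:2505.20652 — 2 statements merged into one kernel-verified Lean document; each statement's English description precedes it below -/
import Mathlib

section
/- Let r > s be positive integers and let P_{n_1},…,P_{n_r} be paths with 2 ≤ n_1 ≤ n_2 ≤ … ≤ n_r. Then R_{r,s}(P_{n_1},…,P_{n_r}) ≥ ⌊(n_1 − 1)/2⌋ · ⌊r/s⌋ + 1. -/
/-!
Lower bound: with `t = ⌊r/s⌋` and `q = ⌊(n₁ - 1)/2⌋`, split `t·s` of the colours into `t` disjoint
groups of size `s` indexed by `ℤ/t`, split the `N ≤ t·q` vertices into `t` blocks of size `q`, and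
give an edge between blocks `a` and `b` the group `a + b`. Along a path in one colour consecutive
block indices have constant sum, so all even-indexed vertices lie in a single block; a path on
`2q + 1` vertices would put `q + 1` of them there.

The set-colouring Ramsey number must also be shown finite, since `sInf ∅ = 0`. For each colour `i`,
the number of vertices of a longest increasing path of colour `i` ending at `v` is a proper colouring
of the graph of colour `i`, with fewer than `nᵢ` values when that graph has no `P_{nᵢ}`. These
vectors separate the vertices, so a colouring without the required paths has `N ≤ ∏ nᵢ`.
-/

open SimpleGraph Finset

/-- `K_N` (with vertices `Fin N`) colored by `χ` contains a copy of `H` all of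
whose edges' color sets contain the color element `i`. -/
def MonoCopy {W : Type} (H : SimpleGraph W) {N r : ℕ}
    (χ : Sym2 (Fin N) → Finset (Fin r)) (i : Fin r) : Prop :=
  ∃ f : W → Fin N, Function.Injective f ∧ ∀ u v, H.Adj u v → i ∈ χ s(f u, f v)

/-- Every `(r,s)`-coloring of the edges of `K_N` (each edge gets an `s`-element
subset of `Fin r`) yields, for some `i`, a copy of `G i` monochromatic with
color element `i`. -/
def SetRamseyProp {r : ℕ} (s : ℕ) {V : Fin r → Type} (G : ∀ i, SimpleGraph (V i))
    (N : ℕ) : Prop :=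
  ∀ χ : Sym2 (Fin N) → Finset (Fin r),
    (∀ e : Sym2 (Fin N), ¬ e.IsDiag → (χ e).card = s) →
    ∃ i, MonoCopy (G i) χ i

/-- The set-coloring Ramsey number `R_{r,s}(G₁,…,G_r)`. -/
noncomputable def setRamsey {r : ℕ} (s : ℕ) {V : Fin r → Type}
    (G : ∀ i, SimpleGraph (V i)) : ℕ :=
  sInf {N | SetRamseyProp s G N}

def colorGraph {V C : Type*} (χ : Sym2 V → Finset C) (c : C) : SimpleGraph V where
  Adj u v := u ≠ v ∧ c ∈ χ s(u, v)
  symm := ⟨fun _ _ h => ⟨h.1.symm, Sym2.eq_swap ▸ h.2⟩⟩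
  loopless := ⟨fun _ h => h.1 rfl⟩

lemma monoCopy_iff_isContained {W : Type} (H : SimpleGraph W) {N r : ℕ}
    (χ : Sym2 (Fin N) → Finset (Fin r)) (i : Fin r) :
    MonoCopy H χ i ↔ H ⊑ colorGraph χ i := by
  constructor
  · rintro ⟨f, hf, hadj⟩
    exact ⟨⟨⟨f, fun {u v} h => ⟨hf.ne (H.ne_of_adj h), hadj u v h⟩⟩, hf⟩⟩
  · rintro ⟨f⟩
    exact ⟨f, f.injective, fun u v h => (f.toHom.map_adj h).2⟩

lemma pathGraph_isContained_of_le {k m : ℕ} (h : k ≤ m) : pathGraph k ⊑ pathGraph m :=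
  ⟨⟨⟨Fin.castLE h, fun hadj => by simpa [pathGraph_adj] using hadj⟩, Fin.castLE_injective h⟩⟩

section AscendingPaths

variable {N : ℕ} (G : SimpleGraph (Fin N)) [DecidableRel G.Adj]

def ascLen (v : Fin N) : ℕ :=
  ((univ.filter fun u => u < v ∧ G.Adj u v).attach.sup fun u => ascLen u.1) + 1
termination_by v.val
decreasing_by exact (mem_filter.mp u.2).2.1

variable {G}

lemma ascLen_lt_ascLen {u v : Fin N} (huv : u < v) (h : G.Adj u v) :
    ascLen G u < ascLen G v := by
  conv_rhs => rw [ascLen]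
  have hu : u ∈ univ.filter fun w => w < v ∧ G.Adj w v := by simp [huv, h]
  have := le_sup (f := fun w : {w // w ∈ univ.filter fun w => w < v ∧ G.Adj w v} => ascLen G w.1)
    (mem_attach _ ⟨u, hu⟩)
  exact Nat.lt_add_one_of_le this

lemma exists_isPath_length_add_one_eq_ascLen (v : Fin N) :
    ∃ (u : Fin N) (w : G.Walk u v), w.IsPath ∧ (∀ x ∈ w.support, x ≤ v) ∧
      w.length + 1 = ascLen G v := by
  induction v using WellFoundedLT.induction with
  | _ v ih =>
  rcases (univ.filter fun u => u < v ∧ G.Adj u v).eq_empty_or_nonempty with hempty | hne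
  · refine ⟨v, .nil, .nil, by simp, ?_⟩
    rw [ascLen, hempty]
    rfl
  obtain ⟨⟨u, hu⟩, -, hsup⟩ := exists_mem_eq_sup _ (attach_nonempty_iff.mpr hne)
    fun u => ascLen G u.1
  obtain ⟨-, huv, hadj⟩ := mem_filter.mp hu
  obtain ⟨x, w, hw, hsupp, hlen⟩ := ih u huv
  have hv : v ∉ w.support := fun hv => (hsupp v hv).not_gt huv
  refine ⟨x, w.concat hadj, hw.concat hv hadj, ?_, ?_⟩
  · simp only [Walk.support_concat, List.mem_append, List.mem_singleton]
    rintro y (hy | rfl)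
    · exact (hsupp y hy).trans huv.le
    · exact le_rfl
  · rw [Walk.length_concat, ascLen, hsup, hlen]

lemma ascLen_lt_of_free {n : ℕ} (h : (pathGraph n).Free G) (v : Fin N) : ascLen G v < n := by
  by_contra! hle
  obtain ⟨u, w, hw, -, hlen⟩ := exists_isPath_length_add_one_eq_ascLen (G := G) v
  exact h ((pathGraph_isContained_of_le hle).trans (hlen ▸ hw.isContained_pathGraph))

end AscendingPaths

lemma card_le_prod_of_pathGraph_free {N : ℕ} {ι : Type*} [Fintype ι] (G : ι → SimpleGraph (Fin N))
    [∀ i, DecidableRel (G i).Adj] (n : ι → ℕ) (hcover : ∀ u v, u ≠ v → ∃ i, (G i).Adj u v)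
    (hfree : ∀ i, (pathGraph (n i)).Free (G i)) : N ≤ ∏ i, n i := by
  classical
  have hinj : Function.Injective fun v i => (⟨ascLen (G i) v, ascLen_lt_of_free (hfree i) v⟩ :
      Fin (n i)) := by
    intro u v huv
    by_contra hne
    obtain ⟨i, hi⟩ := hcover u v hne
    have heq : ascLen (G i) u = ascLen (G i) v := congrArg Fin.val (congrFun huv i)
    rcases lt_or_gt_of_ne hne with h | h
    · exact (ascLen_lt_ascLen h hi).ne heq
    · exact (ascLen_lt_ascLen h hi.symm).ne' heq
  simpa using Fintype.card_le_of_injective _ hinj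

lemma setRamseyProp_pathGraph {r s : ℕ} (hs : 0 < s) (n : Fin r → ℕ) :
    SetRamseyProp s (fun i => pathGraph (n i)) (∏ i, n i + 1) := by
  classical
  intro χ hχ
  by_contra! hfree
  have hcover (u v : Fin (∏ i, n i + 1)) (huv : u ≠ v) : ∃ i, (colorGraph χ i).Adj u v := by
    obtain ⟨i, hi⟩ := card_pos.mp (hχ s(u, v) (by simpa using huv) ▸ hs)
    exact ⟨i, huv, hi⟩
  have := card_le_prod_of_pathGraph_free (fun i => colorGraph χ i) n hcover
    fun i hi => hfree i ((monoCopy_iff_isContained _ χ i).2 hi)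
  omega

section SumColoring

variable {A B : Type*} [AddCommGroup A]

def sumGraph (j : A) : SimpleGraph (A × B) where
  Adj x y := x ≠ y ∧ x.1 + y.1 = j
  symm := ⟨fun x y h => ⟨h.1.symm, add_comm x.1 y.1 ▸ h.2⟩⟩
  loopless := ⟨fun _ h => h.1 rfl⟩

lemma fst_apply_even_eq {j : A} {m : ℕ} (f : pathGraph m →g sumGraph (B := B) j) (l : ℕ)
    (hl : 2 * l < m) : (f ⟨2 * l, hl⟩).1 = (f ⟨0, by omega⟩).1 := by
  induction l with
  | zero => rfl
  | succ l ih =>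
    rw [← ih (by omega)]
    have h₁ := (f.map_adj (show (pathGraph m).Adj ⟨2 * l, by omega⟩ ⟨2 * l + 1, by omega⟩ by
      simp [pathGraph_adj])).2
    have h₂ := (f.map_adj (show (pathGraph m).Adj ⟨2 * l + 1, by omega⟩ ⟨2 * l + 2, hl⟩ by
      simp [pathGraph_adj])).2
    exact add_left_cancel (h₂.trans (h₁.symm.trans (add_comm _ _)))

lemma pathGraph_free_sumGraph [Fintype B] (j : A) :
    (pathGraph (2 * Fintype.card B + 1)).Free (sumGraph (B := B) j) := by
  rintro ⟨f⟩
  have heven (l : Fin (Fintype.card B + 1)) : 2 * l.val < 2 * Fintype.card B + 1 := by omega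
  have hinj : Function.Injective fun l => (f ⟨2 * l.val, heven l⟩).2 := by
    intro a b hab
    have := f.injective (Prod.ext ((fst_apply_even_eq f.toHom a _).trans
      (fst_apply_even_eq f.toHom b _).symm) hab)
    ext
    simpa using this
  simpa using Fintype.card_le_of_injective _ hinj

variable {V C : Type*} {s : ℕ}

def sumColoring (e : V → A × B) (c : A × Fin s ↪ C) : Sym2 V → Finset C :=
  Sym2.lift ⟨fun u v => univ.map ((Function.Embedding.sectR ((e u).1 + (e v).1) _).trans c),
    fun u v => by dsimp only; rw [add_comm]⟩

lemma card_sumColoring (e : V → A × B) (c : A × Fin s ↪ C) (z : Sym2 V) :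
    (sumColoring e c z).card = s := by
  induction z using Sym2.ind
  simp [sumColoring]

lemma exists_colorGraph_sumColoring_le (e : V ↪ A × B) (c : A × Fin s ↪ C) (i : C) :
    ∃ j, colorGraph (sumColoring e c) i ≤ (sumGraph j).comap e := by
  by_cases hi : ∃ j k, c (j, k) = i
  · obtain ⟨j, k, rfl⟩ := hi
    refine ⟨j, fun u v ⟨huv, hc⟩ => ⟨e.injective.ne huv, ?_⟩⟩
    obtain ⟨k', hk'⟩ : ∃ k', c ((e u).1 + (e v).1, k') = c (j, k) := by simpa [sumColoring] using hc
    exact congrArg Prod.fst (c.injective hk')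
  · refine ⟨0, fun u v ⟨_, hc⟩ => (hi ⟨(e u).1 + (e v).1, ?_⟩).elim⟩
    simpa [sumColoring] using hc

end SumColoring

lemma not_setRamseyProp_pathGraph {A B : Type*} [AddCommGroup A] [Fintype B] {N r s : ℕ}
    (e : Fin N ↪ A × B) (c : A × Fin s ↪ Fin r) (n : Fin r → ℕ)
    (hn : ∀ i, 2 * Fintype.card B + 1 ≤ n i) :
    ¬ SetRamseyProp s (fun i => pathGraph (n i)) N := by
  intro h
  obtain ⟨i, hi⟩ := h (sumColoring e c) fun z _ => card_sumColoring e c z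
  obtain ⟨j, hj⟩ := exists_colorGraph_sumColoring_le e c i
  exact pathGraph_free_sumGraph j <| (pathGraph_isContained_of_le (hn i)).trans <|
    ((monoCopy_iff_isContained _ _ i).1 hi).trans <|
      (IsContained.of_le hj).trans (Embedding.comap e _).isContained

/-- `R_{r,s}(P_{n₁},…,P_{n_r}) ≥ ⌊(n₁ − 1)/2⌋·⌊r/s⌋ + 1` for `r > s ≥ 1` and
`2 ≤ n₁ ≤ … ≤ n_r`. -/
theorem setRamsey_paths_lower (r s : ℕ) (hs : 0 < s) (hrs : s < r)
    (n : Fin r → ℕ) (hn : ∀ i, 2 ≤ n i) (hmono : Monotone n) :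
    (n ⟨0, Nat.lt_of_le_of_lt (Nat.zero_le s) hrs⟩ - 1) / 2 * (r / s) + 1
      ≤ setRamsey s (fun i => pathGraph (n i)) := by
  set q := (n ⟨0, Nat.lt_of_le_of_lt (Nat.zero_le s) hrs⟩ - 1) / 2
  set t := r / s
  have : NeZero t := ⟨(Nat.div_pos hrs.le hs).ne'⟩
  refine le_csInf ⟨_, setRamseyProp_pathGraph hs n⟩ fun N hN => ?_
  by_contra! hN_small
  have hq (i : Fin r) : 2 * Fintype.card (Fin q) + 1 ≤ n i := by
    have := hmono (show ⟨0, Nat.lt_of_le_of_lt (Nat.zero_le s) hrs⟩ ≤ i from Nat.zero_le _)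
    have := hn i
    simp only [Fintype.card_fin]
    omega
  exact not_setRamseyProp_pathGraph
    ((Fin.castLEEmb (by rw [mul_comm]; omega : N ≤ t * q)).trans finProdFinEquiv.symm.toEmbedding)
    (finProdFinEquiv.toEmbedding.trans (Fin.castLEEmb (Nat.div_mul_le_self r s))) n hq hN
end

section
/- For every n ≥ 2, R_{3,2}(K_{1,2}, K_{1,n}, K_{1,n}) = n + 1. -/
/-!
At a vertex `v` of `K_{n+1}`, if two of the `n` edges at `v` contain colour `0` they form a
`0`-star `K_{1,2}`. Otherwise at most one edge at `v` misses colour `1` or colour `2`, so colours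
`1` and `2` occur on at least `2n - 1` of these edge–colour incidences together, and one of them
occurs on all `n` edges: a monochromatic `K_{1,n}` centred at `v`. On `n` vertices the constant
colouring `{1, 2}` has neither a `0`-edge nor room for a `K_{1,n}`.
-/

open SimpleGraph Finset

/-- The edges `e` with `P e` contain a copy of the star `K_{1,m}`. -/
def ContainsStar {V : Type*} (P : Sym2 V → Prop) (m : ℕ) : Prop :=
  ∃ f : Unit ⊕ Fin m → V, Function.Injective f ∧
    ∀ u w, (completeBipartiteGraph Unit (Fin m)).Adj u w → P s(f u, f w)

namespace ContainsStar

variable {V : Type*} {P : Sym2 V → Prop} {m : ℕ}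

theorem of_le_card (v : V) (S : Finset V) (hv : v ∉ S) (hS : m ≤ #S)
    (hP : ∀ u ∈ S, P s(v, u)) : ContainsStar P m := by
  obtain ⟨T, hTS, hT⟩ := exists_subset_card_eq hS
  let e : Fin m ≃ T := (T.equivFinOfCardEq hT).symm
  have hleaf (k : Fin m) : (e k : V) ∈ S := hTS (e k).2
  refine ⟨Sum.elim (fun _ => v) (fun k => e k), ?_, ?_⟩
  · rintro (⟨⟩ | a) (⟨⟩ | b) h <;> simp only [Sum.elim_inl, Sum.elim_inr] at h
    · rfl
    · exact absurd (h ▸ hleaf b) hv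
    · exact absurd (h ▸ hleaf a) hv
    · rw [e.injective (Subtype.ext h)]
  · rintro (⟨⟩ | a) (⟨⟩ | b) hadj
    · simp at hadj
    · exact hP _ (hleaf b)
    · exact Sym2.eq_swap ▸ hP _ (hleaf a)
    · simp at hadj

theorem card_le [Fintype V] (h : ContainsStar P m) : m + 1 ≤ Fintype.card V := by
  obtain ⟨f, hf, -⟩ := h
  simpa [add_comm] using Fintype.card_le_of_injective f hf

theorem exists_of_pos (h : ContainsStar P m) (hm : 0 < m) : ∃ e, P e := by
  obtain ⟨f, -, hP⟩ := h
  exact ⟨_, hP (Sum.inl ()) (Sum.inr ⟨0, hm⟩) (by simp)⟩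

end ContainsStar

theorem Finset.le_card_or_le_card_of_subset_union {α : Type*} [DecidableEq α]
    {A B C T : Finset α} (hcover : T ⊆ B ∪ C) (hboth : T \ A ⊆ B ∩ C) (hA : #A ≤ 1) :
    #T ≤ #B ∨ #T ≤ #C := by
  have hunion := card_le_card hcover
  have hinter := card_le_card hboth
  have hsdiff := le_card_sdiff A T
  have := card_union_add_card_inter B C
  omega

theorem one_mem_or_two_mem_of_card_eq_two {s : Finset (Fin 3)} (hs : #s = 2) :
    1 ∈ s ∨ 2 ∈ s := by
  revert s; decide

theorem one_mem_and_two_mem_of_zero_notMem {s : Finset (Fin 3)} (hs : #s = 2) (h0 : 0 ∉ s) :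
    1 ∈ s ∧ 2 ∈ s := by
  revert s; decide

theorem containsStar_of_card_eq_two {V : Type*} [DecidableEq V] (χ : Sym2 V → Finset (Fin 3))
    (v : V) (T : Finset V) (hvT : v ∉ T) (hχ : ∀ u ∈ T, #(χ s(v, u)) = 2) :
    ContainsStar (0 ∈ χ ·) 2 ∨ ContainsStar (1 ∈ χ ·) #T ∨ ContainsStar (2 ∈ χ ·) #T := by
  let colorNbhd (i : Fin 3) : Finset V := T.filter (i ∈ χ s(v, ·))
  have hstar (i : Fin 3) {m : ℕ} (hm : m ≤ #(colorNbhd i)) : ContainsStar (i ∈ χ ·) m :=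
    .of_le_card v _ (fun h => hvT (mem_filter.1 h).1) hm fun u hu => (mem_filter.1 hu).2
  by_cases h0 : 2 ≤ #(colorNbhd 0)
  · exact .inl (hstar 0 h0)
  have hcover : T ⊆ colorNbhd 1 ∪ colorNbhd 2 := fun u hu => by
    rcases one_mem_or_two_mem_of_card_eq_two (hχ u hu) with h | h
    · exact mem_union_left _ (mem_filter.2 ⟨hu, h⟩)
    · exact mem_union_right _ (mem_filter.2 ⟨hu, h⟩)
  have hboth : T \ colorNbhd 0 ⊆ colorNbhd 1 ∩ colorNbhd 2 := fun u hu => by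
    obtain ⟨huT, hu0⟩ := mem_sdiff.1 hu
    obtain ⟨h1, h2⟩ := one_mem_and_two_mem_of_zero_notMem (hχ u huT)
      fun h => hu0 (mem_filter.2 ⟨huT, h⟩)
    exact mem_inter.2 ⟨mem_filter.2 ⟨huT, h1⟩, mem_filter.2 ⟨huT, h2⟩⟩
  rcases le_card_or_le_card_of_subset_union hcover hboth (by omega) with h | h
  · exact .inr (.inl (hstar 1 h))
  · exact .inr (.inr (hstar 2 h))

theorem setRamsey_three_two_stars_general (n : ℕ) :
    IsLeast {N : ℕ | ∀ χ : Sym2 (Fin N) → Finset (Fin 3),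
      (∀ e : Sym2 (Fin N), ¬ e.IsDiag → (χ e).card = 2) →
      ((∃ f : Unit ⊕ Fin 2 → Fin N, Function.Injective f ∧
          ∀ u v, (completeBipartiteGraph Unit (Fin 2)).Adj u v →
            (0 : Fin 3) ∈ χ s(f u, f v)) ∨
       (∃ f : Unit ⊕ Fin n → Fin N, Function.Injective f ∧
          ∀ u v, (completeBipartiteGraph Unit (Fin n)).Adj u v →
            (1 : Fin 3) ∈ χ s(f u, f v)) ∨
       (∃ f : Unit ⊕ Fin n → Fin N, Function.Injective f ∧
          ∀ u v, (completeBipartiteGraph Unit (Fin n)).Adj u v →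
            (2 : Fin 3) ∈ χ s(f u, f v)))} (n + 1) := by
  constructor
  · intro χ hχ
    have hT : #(univ.erase (0 : Fin (n + 1))) = n := by simp
    have hstars := containsStar_of_card_eq_two χ 0 (univ.erase 0) (notMem_erase _ _) fun u hu =>
      hχ _ (Sym2.mk_isDiag_iff.not.2 (ne_of_mem_erase hu).symm)
    rwa [hT] at hstars
  · intro N hN
    by_contra! hlt
    rcases hN (fun _ => {1, 2}) (fun _ _ => rfl) with h0 | h1 | h2
    · obtain ⟨e, he⟩ := ContainsStar.exists_of_pos (P := fun _ => _) h0 two_pos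
      simp at he
    · have := ContainsStar.card_le (P := fun _ => _) h1; simp at this; omega
    · have := ContainsStar.card_le (P := fun _ => _) h2; simp at this; omega

/-- `R_{3,2}(K_{1,2}, K_{1,n}, K_{1,n}) = n + 1` for `n ≥ 2`. Stars `K_{1,m}`
are realized as complete bipartite graphs with parts `Unit` and `Fin m`. -/
theorem setRamsey_three_two_stars (n : ℕ) (hn : 2 ≤ n) :
    IsLeast {N : ℕ | ∀ χ : Sym2 (Fin N) → Finset (Fin 3),
      (∀ e : Sym2 (Fin N), ¬ e.IsDiag → (χ e).card = 2) →
      ((∃ f : Unit ⊕ Fin 2 → Fin N, Function.Injective f ∧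
          ∀ u v, (completeBipartiteGraph Unit (Fin 2)).Adj u v →
            (0 : Fin 3) ∈ χ s(f u, f v)) ∨
       (∃ f : Unit ⊕ Fin n → Fin N, Function.Injective f ∧
          ∀ u v, (completeBipartiteGraph Unit (Fin n)).Adj u v →
            (1 : Fin 3) ∈ χ s(f u, f v)) ∨
       (∃ f : Unit ⊕ Fin n → Fin N, Function.Injective f ∧
          ∀ u v, (completeBipartiteGraph Unit (Fin n)).Adj u v →
            (2 : Fin 3) ∈ χ s(f u, f v)))} (n + 1) :=
  setRamsey_three_two_stars_general n
end
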